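/- Define polynomials 𝔭_n(x) by 𝔭_0 = 1, 𝔭_1 = x, and 𝔭_{n+1} = x·𝔭_n + q^{2-2n}[n][n-2]·𝔭_{n-1}. Then for n ≥ 2, (x-1) divides 𝔭_n(x) in ℚ(q)[x], and moreover 𝔭_n(x)/(x-1) has all coefficients in ℕ[q^{-1}]. -/

import Mathlib

open Finset Polynomial

noncomputable def q : RatFunc ℚ := RatFunc.X

noncomputable def qa (n : ℤ) : RatFunc ℚ := (q ^ n - q ^ (-n)) / (q - q⁻¹)

noncomputable def qfac (n : ℕ) : RatFunc ℚ := ∏ k ∈ Finset.range n, qa ((k : ℤ) + 1)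

noncomputable def qbin (a : ℤ) (n : ℕ) : RatFunc ℚ :=
  ∏ k ∈ Finset.range n, qa (a - (k : ℤ)) / qa ((k : ℤ) + 1)

noncomputable def qa2 (n : ℤ) : RatFunc ℚ :=
  (q ^ (2 * n) - q ^ (-(2 * n))) / (q ^ (2 : ℤ) - q ^ (-2 : ℤ))

noncomputable def qbin2 (a : ℤ) (n : ℕ) : RatFunc ℚ :=
  ∏ k ∈ Finset.range n, qa2 (a - (k : ℤ)) / qa2 ((k : ℤ) + 1)

noncomputable def LaurentZ : Subring (RatFunc ℚ) := Subring.closure {q, q⁻¹}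

noncomputable def NatLaurent : Subsemiring (RatFunc ℚ) := Subsemiring.closure {q⁻¹}

/-! The recurrence coefficient `c n = q ^ (2 - 2n) [n] [n - 2]` equals `-1` for `n = 1`, `0` for
`n = 2`, and for `n ≥ 2` it is `q⁻² · (q ^ (1 - n) [n]) · (q ^ (3 - n) [n - 2])`, a product of
geometric sums in `q⁻²`, hence lies in `ℕ[q⁻¹]`. So `𝔭_2 = (x - 1)(x + 1)`, `𝔭_3 = x 𝔭_2`, and the
set of polynomials `(x - 1) r` with `r ∈ ℕ[q⁻¹][x]` is stable under `f, g ↦ x f + c g` for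
`c ∈ ℕ[q⁻¹]`, which propagates the claim along the recurrence. -/

lemma q_ne_zero : q ≠ 0 := RatFunc.X_ne_zero

lemma q_sq_ne_one : q ^ 2 ≠ 1 := by
  intro h
  have := congrArg RatFunc.intDegree h
  rw [sq, RatFunc.intDegree_mul q_ne_zero q_ne_zero, q, RatFunc.intDegree_X,
    RatFunc.intDegree_one] at this
  norm_num at this

lemma q_sub_inv_ne_zero : q - q⁻¹ ≠ 0 := by
  refine sub_ne_zero.mpr fun h => q_sq_ne_one ?_
  rw [sq]
  nth_rw 2 [h]
  exact mul_inv_cancel₀ q_ne_zero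

lemma qa_zero : qa 0 = 0 := by simp [qa]

lemma qa_one : qa 1 = 1 := by
  simpa [qa] using div_self q_sub_inv_ne_zero

lemma qa_neg (n : ℤ) : qa (-n) = -qa n := by
  rw [qa, qa, neg_neg, ← neg_sub, neg_div]

lemma zpow_mul_qa_natCast (n : ℕ) :
    q ^ (1 - (n : ℤ)) * qa n = ∑ k ∈ range n, (q⁻¹ ^ 2) ^ k := by
  have hq := q_ne_zero
  have hq2 : q ^ 2 - 1 ≠ 0 := sub_ne_zero.mpr q_sq_ne_one
  have hq2' : 1 - q ^ 2 ≠ 0 := sub_ne_zero.mpr q_sq_ne_one.symm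
  have hpow : (q⁻¹ ^ 2) ^ n = ((q ^ n) ^ 2)⁻¹ := by ring
  rw [geom_sum_eq (by simpa [inv_pow] using q_sq_ne_one), hpow, qa, zpow_sub₀ hq, zpow_neg,
    zpow_natCast, zpow_one]
  have hqn : q ^ n ≠ 0 := pow_ne_zero n hq
  generalize q ^ n = t at *
  field_simp
  ring

lemma inv_q_mem_natLaurent : q⁻¹ ∈ NatLaurent :=
  Subsemiring.subset_closure rfl

lemma zpow_mul_qa_natCast_mem_natLaurent (n : ℕ) : q ^ (1 - (n : ℤ)) * qa n ∈ NatLaurent := by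
  rw [zpow_mul_qa_natCast]
  exact sum_mem fun k _ => pow_mem (pow_mem inv_q_mem_natLaurent 2) k

lemma recCoeff_mem_natLaurent (n : ℕ) (hn : 2 ≤ n) :
    q ^ (2 - 2 * (n : ℤ)) * qa n * qa ((n : ℤ) - 2) ∈ NatLaurent := by
  obtain ⟨m, rfl⟩ := Nat.exists_eq_add_of_le' hn
  have hprod := mul_mem (mul_mem (pow_mem inv_q_mem_natLaurent 2)
    (zpow_mul_qa_natCast_mem_natLaurent (m + 2))) (zpow_mul_qa_natCast_mem_natLaurent m)
  push_cast at hprod ⊢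
  convert hprod using 1
  rw [show (2 : ℤ) - 2 * (m + 2) = -2 + (1 - (m + 2)) + (1 - m) by ring, zpow_add₀ q_ne_zero,
    zpow_add₀ q_ne_zero, zpow_neg, zpow_ofNat, inv_pow, add_sub_cancel_right]
  ring

section XSubOneFactor

variable {R : Type*} [CommRing R] (S : Subsemiring R)

def HasXSubOneFactorIn (f : R[X]) : Prop :=
  ∃ r ∈ lifts S.subtype, f = (X - 1) * r

variable {S}

lemma HasXSubOneFactorIn.X_mul_add_C_mul {f g : R[X]} (hf : HasXSubOneFactorIn S f)
    (hg : HasXSubOneFactorIn S g) {c : R} (hc : c ∈ S) :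
    HasXSubOneFactorIn S (X * f + C c * g) := by
  obtain ⟨r, hr, rfl⟩ := hf
  obtain ⟨s, hs, rfl⟩ := hg
  refine ⟨X * r + C c * s, ?_, by ring⟩
  exact add_mem (mul_mem (X_mem_lifts _) hr) (mul_mem (C_mem_lifts S.subtype ⟨c, hc⟩) hs)

lemma HasXSubOneFactorIn.exists_coeff_mem {f : R[X]} (hf : HasXSubOneFactorIn S f) :
    ∃ r : R[X], f = (X - 1) * r ∧ ∀ k, r.coeff k ∈ S := by
  obtain ⟨r, hr, rfl⟩ := hf
  refine ⟨r, rfl, fun k => ?_⟩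
  simpa using (lifts_iff_coeff_lifts r).mp hr k

end XSubOneFactor

/-- For n ≥ 2, (x-1) divides 𝔭_n(x) and the quotient has coefficients in ℕ[q⁻¹],
where 𝔭_{n+1} = x·𝔭_n + q^{2-2n}[n][n-2]·𝔭_{n-1}. -/
theorem stmt7 (p : ℕ → Polynomial (RatFunc ℚ))
    (hp0 : p 0 = 1) (hp1 : p 1 = Polynomial.X)
    (hrec : ∀ n : ℕ, 1 ≤ n →
      p (n + 1) = Polynomial.X * p n
        + Polynomial.C (q ^ (2 - 2 * (n : ℤ)) * qa n * qa ((n : ℤ) - 2)) * p (n - 1)) :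
    ∀ n : ℕ, 2 ≤ n → ∃ r : Polynomial (RatFunc ℚ),
      p n = (Polynomial.X - 1) * r ∧ ∀ k : ℕ, r.coeff k ∈ NatLaurent := by
  have hp2 : p 2 = (X - 1) * (X + 1) := by
    rw [hrec 1 le_rfl, hp0, hp1]
    simp only [Nat.cast_one, mul_one, sub_self, zpow_ofNat, pow_zero, qa_one, Int.reduceSub,
      qa_neg, mul_neg, map_neg, map_one]
    ring
  have hp3 : p 3 = X * p 2 := by
    rw [hrec 2 one_le_two]
    simp [qa_zero]
  have hX_add_one : (X + 1 : (RatFunc ℚ)[X]) ∈ lifts NatLaurent.subtype :=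
    add_mem (X_mem_lifts _) (one_mem _)
  have hfactor : ∀ m, HasXSubOneFactorIn NatLaurent (p (m + 2)) := by
    intro m
    induction m using Nat.twoStepInduction with
    | zero => exact ⟨X + 1, hX_add_one, hp2⟩
    | one => exact ⟨X * (X + 1), mul_mem (X_mem_lifts _) hX_add_one, by rw [hp3, hp2]; ring⟩
    | more m ih₀ ih₁ =>
      rw [show m + 2 + 2 = m + 3 + 1 from rfl, hrec (m + 3) (by omega)]
      exact ih₁.X_mul_add_C_mul ih₀ (recCoeff_mem_natLaurent (m + 3) (by omega))
  intro n hn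
  obtain ⟨m, rfl⟩ := Nat.exists_eq_add_of_le' hn
  exact (hfactor m).exists_coeff_mem
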